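/- There exists P ∈ GL₆(ℤ[i]) with P†·G₄·P equal to the block-diagonal matrix diag(A, A, H₀), where A = [[−2, −(1−i)],[−(1+i), −2]] and H₀ = [[0, 1−i],[1+i, 0]]. That is, the Hermitian lattice Λ₄ = (ℤ[i]⁶, G₄) is isometric to L ⊕ L ⊕ H, where L is the definite lattice with Gram matrix A and H is the (1+i)-modular hyperbolic plane with Gram matrix H₀. -/
import Mathlib


noncomputable section

open Matrix Complex

/-- The Gaussian integers `ℤ[i]`, as a subring of `ℂ`. -/
def RI : Subring ℂ := Subring.closure {Complex.I}

/-- The tridiagonal Gram matrix `G₄` of the lattice `Λ₄`: diagonal entries `−2`, entries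
just above the diagonal `1−i`, entries just below the diagonal `1+i`. -/
def G4 : Matrix (Fin 6) (Fin 6) ℂ :=
  Matrix.of fun i j =>
    if i = j then -2
    else if (i : ℕ) + 1 = (j : ℕ) then 1 - Complex.I
    else if (j : ℕ) + 1 = (i : ℕ) then 1 + Complex.I
    else 0

/-- The Gram matrix of `L ⊕ L ⊕ H`, where `L` has Gram matrix
`A = [[−2, −(1−i)],[−(1+i), −2]]` and `H` has Gram matrix `[[0, 1−i],[1+i, 0]]`. -/
def GLLH : Matrix (Fin 6) (Fin 6) ℂ :=
  !![-2, -(1 - Complex.I), 0, 0, 0, 0;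
     -(1 + Complex.I), -2, 0, 0, 0, 0;
     0, 0, -2, -(1 - Complex.I), 0, 0;
     0, 0, -(1 + Complex.I), -2, 0, 0;
     0, 0, 0, 0, 0, 1 - Complex.I;
     0, 0, 0, 0, 1 + Complex.I, 0]

/-- The change-of-basis matrix. -/
def Pmat : Matrix (Fin 6) (Fin 6) ℂ :=
  !![0, -Complex.I, 0, 0, 0, 0;
     Complex.I, 1, 0, 0, 0, 0;
     0, 0, 0, 0, 0, -Complex.I;
     1, -Complex.I, 0, 0, 1, 1;
     1 + Complex.I, 1 - Complex.I, Complex.I, 0, 1 + Complex.I, 1 + Complex.I;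
     Complex.I, 1, -1 + Complex.I, Complex.I, Complex.I, Complex.I]

/-- The inverse of `Pmat`. -/
def PmatInv : Matrix (Fin 6) (Fin 6) ℂ :=
  !![-1, -Complex.I, 0, 0, 0, 0;
     Complex.I, 0, 0, 0, 0, 0;
     0, 0, 0, -1 + Complex.I, -Complex.I, 0;
     0, 0, 0, 1, -1 + Complex.I, -Complex.I;
     0, Complex.I, -Complex.I, 1, 0, 0;
     0, 0, Complex.I, 0, 0, 0]

/-- The conjugate transpose of `Pmat`, written explicitly. -/
def PHmat : Matrix (Fin 6) (Fin 6) ℂ :=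
  !![0, -Complex.I, 0, 1, 1 - Complex.I, -Complex.I;
     Complex.I, 1, 0, Complex.I, 1 + Complex.I, 1;
     0, 0, 0, 0, -Complex.I, -1 - Complex.I;
     0, 0, 0, 0, 0, -Complex.I;
     0, 0, 0, 1, 1 - Complex.I, -Complex.I;
     0, 0, Complex.I, 1, 1 - Complex.I, -Complex.I]

/-- `G4 * Pmat`. -/
def Qmat : Matrix (Fin 6) (Fin 6) ℂ :=
  !![1 + Complex.I, 1 + Complex.I, 0, 0, 0, 0;
     -(2 * Complex.I), -1 - Complex.I, 0, 0, 0, -1 - Complex.I;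
     0, 0, 0, 0, 1 - Complex.I, 1 + Complex.I;
     0, 0, 1 + Complex.I, 0, 0, 1 - Complex.I;
     0, 0, 0, 1 + Complex.I, 0, 0;
     0, 0, 1 - Complex.I, -(2 * Complex.I), 0, 0]

@[simp] lemma cons_val_five' {α : Type*} (x : α) (u : Fin 5 → α) :
    Matrix.vecCons x u 5 = u 4 := rfl

lemma I_mem_RI : Complex.I ∈ RI := Subring.subset_closure rfl

lemma G4_eq : G4 = !![-2, 1 - Complex.I, 0, 0, 0, 0;
     1 + Complex.I, -2, 1 - Complex.I, 0, 0, 0;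
     0, 1 + Complex.I, -2, 1 - Complex.I, 0, 0;
     0, 0, 1 + Complex.I, -2, 1 - Complex.I, 0;
     0, 0, 0, 1 + Complex.I, -2, 1 - Complex.I;
     0, 0, 0, 0, 1 + Complex.I, -2] := by
  ext i j
  fin_cases i <;> fin_cases j <;> norm_num [G4, Fin.ext_iff]

lemma PH_eq : Pmatᴴ = PHmat := by
  ext i j
  fin_cases i <;> fin_cases j <;>
    simp [Pmat, PHmat, Matrix.vecHead, Matrix.vecTail, Complex.ext_iff] <;>
    norm_num

set_option maxHeartbeats 1600000 in
lemma GP_eq : G4 * Pmat = Qmat := by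
  rw [G4_eq]
  ext i j
  fin_cases i <;> fin_cases j <;>
    simp [Pmat, Qmat, Matrix.mul_apply, Fin.sum_univ_six, Matrix.one_apply,
      Matrix.vecHead, Matrix.vecTail, Complex.ext_iff] <;>
    norm_num

set_option maxHeartbeats 1600000 in
lemma PHQ_eq : PHmat * Qmat = GLLH := by
  skip
  ext i j
  fin_cases i <;> fin_cases j <;>
    simp [PHmat, Qmat, GLLH, Matrix.mul_apply, Fin.sum_univ_six, Matrix.one_apply,
      Matrix.vecHead, Matrix.vecTail, Complex.ext_iff] <;>
    norm_num

lemma PPinv : Pmat * PmatInv = 1 := by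
  skip
  ext i j
  fin_cases i <;> fin_cases j <;>
    simp [Pmat, PmatInv, Matrix.mul_apply, Fin.sum_univ_six, Matrix.one_apply,
      Matrix.vecHead, Matrix.vecTail, Complex.ext_iff] <;>
    norm_num

lemma PinvP : PmatInv * Pmat = 1 := by
  skip
  ext i j
  fin_cases i <;> fin_cases j <;>
    simp [Pmat, PmatInv, Matrix.mul_apply, Fin.sum_univ_six, Matrix.one_apply,
      Matrix.vecHead, Matrix.vecTail, Complex.ext_iff] <;>
    norm_num

/-- The Hermitian lattice `Λ₄ = (ℤ[i]⁶, G₄)` is isometric to `L ⊕ L ⊕ H`: there is a matrix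
`P ∈ GL₆(ℤ[i])` with `P† G₄ P = diag(A, A, H₀)`. -/
theorem lambda4_isometric_LLH :
    ∃ P : Matrix (Fin 6) (Fin 6) ℂ, (∀ i j, P i j ∈ RI) ∧
      (∃ Pinv : Matrix (Fin 6) (Fin 6) ℂ, (∀ i j, Pinv i j ∈ RI) ∧
        P * Pinv = 1 ∧ Pinv * P = 1) ∧
      Pᴴ * G4 * P = GLLH := by
  refine ⟨Pmat, ?_, ⟨PmatInv, ?_, PPinv, PinvP⟩, ?_⟩
  · intro i j
    fin_cases i <;> fin_cases j <;>
      simp only [Pmat, Matrix.cons_val', Matrix.cons_val_zero, Matrix.cons_val_one,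
        Matrix.head_cons, Matrix.empty_val', Matrix.cons_val_fin_one, Matrix.head_fin_const,
        Matrix.of_apply, Matrix.cons_val_succ, Fin.isValue] <;>
      first
        | exact zero_mem _
        | exact one_mem _
        | exact I_mem_RI
        | exact neg_mem I_mem_RI
        | exact neg_mem (one_mem _)
        | exact add_mem (one_mem _) I_mem_RI
        | exact sub_mem (one_mem _) I_mem_RI
        | exact add_mem (neg_mem (one_mem _)) I_mem_RI
        | exact sub_mem (neg_mem (one_mem _)) I_mem_RI
  · intro i j
    fin_cases i <;> fin_cases j <;>
      simp only [PmatInv, Matrix.cons_val', Matrix.cons_val_zero, Matrix.cons_val_one,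
        Matrix.head_cons, Matrix.empty_val', Matrix.cons_val_fin_one, Matrix.head_fin_const,
        Matrix.of_apply, Matrix.cons_val_succ, Fin.isValue] <;>
      first
        | exact zero_mem _
        | exact one_mem _
        | exact I_mem_RI
        | exact neg_mem I_mem_RI
        | exact neg_mem (one_mem _)
        | exact add_mem (one_mem _) I_mem_RI
        | exact sub_mem (one_mem _) I_mem_RI
        | exact add_mem (neg_mem (one_mem _)) I_mem_RI
        | exact sub_mem (neg_mem (one_mem _)) I_mem_RI
  · rw [Matrix.mul_assoc, GP_eq, PH_eq, PHQ_eq]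

end
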